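/- Let N = {1,…,9} and let W be the simple game whose winning coalitions are exactly those A ⊆ N with |A ∩ {8,9}| ≥ 1, |A ∩ {7,8,9}| ≥ 2, |A ∩ {4,5,6,7,8,9}| ≥ 3, and |A| ≥ 4 (the linear game generated by the single shift-minimal winning coalition {8,7,4,1}). Then W is not weighted: there exist no weights w : N → ℝ with w_i ≥ 0 and no quota q > 0 such that for every A ⊆ N, A ∈ W ⇔ Σ_{i∈A} w_i ≥ q. (For instance, {9,7,4,1} and {8,7,5,2} are winning while {9,8,7} and {7,5,4,2,1} are losing, yet the two pairs have equal total weight.) -/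

import Mathlib

/-- The linear game on 9 voters generated by the shift-minimal winning coalition
`{8,7,4,1}` (voters `1,…,9` are indices `0,…,8` of `Fin 9`): a coalition wins iff
it contains at least 1 of the top 2 voters, at least 2 of the top 3 voters,
at least 3 of the top 6 voters, and at least 4 voters overall. -/
def game8741 : Set (Finset (Fin 9)) :=
  {A | 1 ≤ (A.filter (fun i => 7 ≤ i.val)).card ∧
       2 ≤ (A.filter (fun i => 6 ≤ i.val)).card ∧
       3 ≤ (A.filter (fun i => 3 ≤ i.val)).card ∧
       4 ≤ A.card}

/-! A weighted game admits no trade: if winning coalitions `A₁, A₂` and losing coalitions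
`B₁, B₂` contain every voter equally often in total, then any weights give
`w(A₁) + w(A₂) = w(B₁) + w(B₂)`, while the quota forces the left side to be at least `2q` and
the right side to be below it. In `⟨8741⟩` the coalitions `{9,7,4,1}, {8,7,5,2}` and
`{9,8,7}, {7,5,4,2,1}` form such a trade. -/

def IsWeighted {ι : Type*} (W : Set (Finset ι)) : Prop :=
  ∃ (q : ℝ) (w : ι → ℝ), (∀ i, 0 ≤ w i) ∧ 0 < q ∧ ∀ A : Finset ι, A ∈ W ↔ q ≤ ∑ i ∈ A, w i

theorem not_isWeighted_of_trade {ι : Type*} {W : Set (Finset ι)} {A₁ A₂ B₁ B₂ : Finset ι}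
    (hA₁ : A₁ ∈ W) (hA₂ : A₂ ∈ W) (hB₁ : B₁ ∉ W) (hB₂ : B₂ ∉ W)
    (htrade : A₁.val + A₂.val = B₁.val + B₂.val) : ¬ IsWeighted W := by
  rintro ⟨q, w, -, -, hW⟩
  have hsum : ∑ i ∈ A₁, w i + ∑ i ∈ A₂, w i = ∑ i ∈ B₁, w i + ∑ i ∈ B₂, w i := by
    simp only [Finset.sum_eq_multiset_sum, ← Multiset.sum_add, ← Multiset.map_add, htrade]
  have hA₁q := (hW A₁).mp hA₁
  have hA₂q := (hW A₂).mp hA₂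
  have hB₁q := not_le.mp (mt (hW B₁).mpr hB₁)
  have hB₂q := not_le.mp (mt (hW B₂).mpr hB₂)
  linarith

instance decidablePredMemGame8741 : DecidablePred (· ∈ game8741) := fun A => by
  unfold game8741
  infer_instance

/-- The game `⟨8741⟩` is not weighted: no nonnegative weights and positive quota
realize exactly its winning coalitions. -/
theorem game8741_not_weighted :
    ¬ ∃ (q : ℝ) (w : Fin 9 → ℝ), (∀ i, 0 ≤ w i) ∧ 0 < q ∧
        ∀ A : Finset (Fin 9), A ∈ game8741 ↔ q ≤ ∑ i ∈ A, w i :=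
  not_isWeighted_of_trade (A₁ := {0, 3, 6, 8}) (A₂ := {1, 4, 6, 7}) (B₁ := {6, 7, 8})
    (B₂ := {0, 1, 3, 4, 6}) (by decide) (by decide) (by decide) (by decide) (by decide)
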